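/- Let H be a real Hilbert space and L : H × H → ℝ ∪ {+∞} a proper convex lower semicontinuous antiselfdual Lagrangian (L*(p,x) = L(−x,−p) for all (x,p)), with λ-regularization L_λ(x,p) = inf_z { L(z,p) + ‖x − z‖²/(2λ) } + (λ/2)‖p‖². Suppose x₀ ∈ Dom₁(∂L), witnessed by p̂ ∈ H with (−p̂, −x₀) ∈ ∂L(x₀, p̂). Then for every λ > 0, any y_λ ∈ H satisfying (−y_λ, −x₀) ∈ ∂L_λ(x₀, y_λ) obeys the bound ‖y_λ‖_H ≤ ‖p̂‖_H. -/

import Mathlib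

/-!
Testing the subdifferential inequality of `L_λ` at `(x₀, y_λ)` against the point
`(x₀ - λ y_λ, p̂)` gives `L_λ(x₀, y_λ) + λ‖y_λ‖² + ⟨x₀, y_λ - p̂⟩ ≤ L_λ(x₀ - λ y_λ, p̂)`.
Taking `z = x₀` in the infimum bounds the right side by `L(x₀, p̂) + λ/2 ‖y_λ‖² + λ/2 ‖p̂‖²`,
while the subgradient `(-p̂, -x₀)` of `L` at `(x₀, p̂)` together with Young's inequality bounds
`L_λ(x₀, y_λ)` below by `L(x₀, p̂) - ⟨x₀, y_λ - p̂⟩ - λ/2 ‖p̂‖² + λ/2 ‖y_λ‖²`.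
Combining, `λ‖y_λ‖² ≤ λ‖p̂‖²`.
-/

open MeasureTheory Set
open scoped RealInnerProductSpace Classical

noncomputable section

def EConvexOn {E : Type*} [AddCommGroup E] [Module ℝ E] (F : E → EReal) : Prop :=
  ∀ x y : E, ∀ a b : ℝ, 0 ≤ a → 0 ≤ b → a + b = 1 →
    F (a • x + b • y) ≤ (a : EReal) * F x + (b : EReal) * F y

/-- A function into `ℝ ∪ {+∞}` is proper: never `-∞` and not identically `+∞`. -/
def EProper {E : Type*} (F : E → EReal) : Prop :=
  (∃ x, F x ≠ ⊤) ∧ ∀ x, F x ≠ ⊥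

/-- Integral of an `ℝ ∪ {+∞}`-valued function: the Bochner integral of its real part when the
function is a.e. finite with integrable real part, and `+∞` otherwise. -/
noncomputable def eIntegral {α : Type*} [MeasurableSpace α] (μ : Measure α) (f : α → EReal) :
    EReal :=
  if Integrable (fun a => (f a).toReal) μ ∧ (∀ᵐ a ∂μ, f a = ((f a).toReal : EReal)) then
    ((∫ a, (f a).toReal ∂μ : ℝ) : EReal)
  else ⊤

variable {H : Type*} [NormedAddCommGroup H] [InnerProductSpace ℝ H]

/-- Fenchel conjugate of a function on `H × H`. -/
noncomputable def eConj2 (F : H × H → EReal) (q : H × H) : EReal :=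
  ⨆ z : H × H, ((⟪z.1, q.1⟫ + ⟪z.2, q.2⟫ : ℝ) : EReal) - F z

/-- Fenchel conjugate of a function on `H`. -/
noncomputable def eConj (f : H → EReal) (p : H) : EReal :=
  ⨆ x : H, ((⟪x, p⟫ : ℝ) : EReal) - f x

/-- `p` is a subgradient of `f` at `x`. -/
def ESubdiff (f : H → EReal) (x p : H) : Prop :=
  ∀ y, f x + ((⟪p, y - x⟫ : ℝ) : EReal) ≤ f y

/-- `q` belongs to the (joint) subdifferential of `F` at `z`. -/
def ESubdiff2 (F : H × H → EReal) (z q : H × H) : Prop :=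
  ∀ w : H × H, F z + ((⟪q.1, w.1 - z.1⟫ + ⟪q.2, w.2 - z.2⟫ : ℝ) : EReal) ≤ F w

/-- Absolutely continuous arcs `x : [0,T] → H` whose derivative `x'` lies in `L^α([0,T];H)`. -/
def IsArc (T α : ℝ) (x x' : ℝ → H) : Prop :=
  MemLp x' (ENNReal.ofReal α) (volume.restrict (Icc 0 T)) ∧
  ∀ t ∈ Icc (0:ℝ) T, x t = x 0 + ∫ s in (0:ℝ)..t, x' s

/-- The `λ`-regularization `L_λ` of a Lagrangian `L` on `H × H`. -/
noncomputable def regLag (lam : ℝ) (L : H × H → EReal) : H × H → EReal :=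
  fun w => (⨅ z : H, L (z, w.2) + ((‖w.1 - z‖^2 / (2*lam) : ℝ) : EReal)) +
    (((lam/2) * ‖w.2‖^2 : ℝ) : EReal)

theorem real_inner_le_young {lam : ℝ} (hlam : 0 < lam) (q v : H) :
    ⟪q, v⟫ ≤ lam / 2 * ‖q‖ ^ 2 + ‖v‖ ^ 2 / (2 * lam) :=
  calc ⟪q, v⟫ ≤ ‖q‖ * ‖v‖ := real_inner_le_norm q v
    _ ≤ lam / 2 * ‖q‖ ^ 2 + ‖v‖ ^ 2 / (2 * lam) := by
      field_simp
      nlinarith [sq_nonneg (lam * ‖q‖ - ‖v‖)]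

theorem EProper.exists_eq_coe_of_eSubdiff2 {F : H × H → EReal} (hF : EProper F)
    {z q : H × H} (hq : ESubdiff2 F z q) : ∃ c : ℝ, F z = c := by
  obtain ⟨⟨w, hw⟩, hbot⟩ := hF
  refine ⟨(F z).toReal, (EReal.coe_toReal (fun htop => hw ?_) (hbot z)).symm⟩
  have hzw := hq w
  rwa [htop, EReal.top_add_coe, top_le_iff] at hzw

omit [InnerProductSpace ℝ H] in
theorem regLag_le (lam : ℝ) (L : H × H → EReal) (x z p : H) :
    regLag lam L (x, p) ≤
      L (z, p) + ((‖x - z‖ ^ 2 / (2 * lam) + lam / 2 * ‖p‖ ^ 2 : ℝ) : EReal) := by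
  rw [EReal.coe_add, ← add_assoc]
  exact add_le_add_left (iInf_le _ z) _

theorem le_regLag_of_eSubdiff2 {L : H × H → EReal} {lam : ℝ} (hlam : 0 < lam)
    {z₀ p₀ q₁ q₂ : H} {c : ℝ} (hc : L (z₀, p₀) = c) (hq : ESubdiff2 L (z₀, p₀) (q₁, q₂))
    (p : H) :
    ((c + ⟪q₂, p - p₀⟫ - lam / 2 * ‖q₁‖ ^ 2 + lam / 2 * ‖p‖ ^ 2 : ℝ) : EReal) ≤
      regLag lam L (z₀, p) := by
  rw [EReal.coe_add]
  refine add_le_add_left (le_iInf fun z => ?_) _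
  have hz := hq (z, p)
  rw [hc, ← EReal.coe_add] at hz
  refine le_trans ?_ (add_le_add_left hz _)
  rw [← EReal.coe_add, EReal.coe_le_coe_iff]
  have hyoung := real_inner_le_young hlam q₁ (z₀ - z)
  have hflip : ⟪q₁, z - z₀⟫ = -⟪q₁, z₀ - z⟫ := by rw [← inner_neg_right, neg_sub]
  dsimp only
  linarith

theorem statement16_general (L : H × H → EReal)
    (hLp : EProper L)
    (x₀ ph : H) (hph : ESubdiff2 L (x₀, ph) (-ph, -x₀)) :
    ∀ lam : ℝ, 0 < lam → ∀ ylam : H,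
      ESubdiff2 (regLag lam L) (x₀, ylam) (-ylam, -x₀) → ‖ylam‖ ≤ ‖ph‖ := by
  intro lam hlam ylam hsub
  obtain ⟨c, hc⟩ := hLp.exists_eq_coe_of_eSubdiff2 hph
  have hlow := le_regLag_of_eSubdiff2 hlam hc hph ylam
  have hupp := regLag_le lam L (x₀ - lam • ylam) x₀ ph
  rw [hc, ← EReal.coe_add] at hupp
  have hreal := (add_le_add_left hlow _).trans ((hsub (x₀ - lam • ylam, ph)).trans hupp)
  rw [← EReal.coe_add, EReal.coe_le_coe_iff] at hreal
  have hstep : ‖x₀ - lam • ylam - x₀‖ ^ 2 / (2 * lam) = lam / 2 * ‖ylam‖ ^ 2 := by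
    rw [sub_sub_cancel_left, norm_neg, norm_smul, Real.norm_eq_abs, abs_of_pos hlam]
    field_simp
  have hquad : ⟪-ylam, x₀ - lam • ylam - x₀⟫ = lam * ‖ylam‖ ^ 2 := by
    rw [sub_sub_cancel_left, inner_neg_neg, real_inner_smul_right, real_inner_self_eq_norm_sq]
  have hcancel : ⟪-x₀, ylam - ph⟫ + ⟪-x₀, ph - ylam⟫ = 0 := by
    rw [← inner_add_right, sub_add_sub_cancel, sub_self, inner_zero_right]
  dsimp only at hreal
  rw [hstep, hquad, norm_neg] at hreal
  have hsq : lam * ‖ylam‖ ^ 2 ≤ lam * ‖ph‖ ^ 2 := by linarith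
  exact (pow_le_pow_iff_left₀ (norm_nonneg _) (norm_nonneg _) two_ne_zero).mp
    (le_of_mul_le_mul_left hsq hlam)

/-- Lemma 3.5 (2): if `x₀ ∈ Dom₁(∂L)`, witnessed by `p̂`, then any solution
`y_λ` of `(−y_λ, −x₀) ∈ ∂L_λ(x₀, y_λ)` satisfies `‖y_λ‖ ≤ ‖p̂‖`. -/
theorem statement16 (L : H × H → EReal)
    (hLp : EProper L) (hLc : EConvexOn L) (hLl : LowerSemicontinuous L)
    (hLasd : ∀ x p : H, eConj2 L (p, x) = L (-x, -p))
    (x₀ ph : H) (hph : ESubdiff2 L (x₀, ph) (-ph, -x₀)) :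
    ∀ lam : ℝ, 0 < lam → ∀ ylam : H,
      ESubdiff2 (regLag lam L) (x₀, ylam) (-ylam, -x₀) → ‖ylam‖ ≤ ‖ph‖ :=
  statement16_general L hLp x₀ ph hph
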